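/- arXiv:math/0402455 — 2 statements merged into one kernel-verified Lean document; each statement's English description precedes it below -/
import Mathlib

section
/- Let A be a Noetherian ring, M a finitely generated A-module, and i a nonnegative integer. Define M_{≤i} = { x ∈ M : dim(A/Ann(x)) ≤ i }. Then M_{≤i} is a submodule of M and the associated primes of M_{≤i} are exactly those associated primes p of M with dim(A/p) ≤ i. -/
/-- If every prime in a chain of `Spec (A ⧸ K)` pulls back to a prime containing `L`,
then the length of the chain is at most `dim (A ⧸ L)`. -/
lemma aux_length_le {A : Type} [CommRing A] (K L : Ideal A)
    (p : LTSeries (PrimeSpectrum (A ⧸ K)))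
    (h : L ≤ (p.head.asIdeal.comap (Ideal.Quotient.mk K))) :
    (p.length : WithBot ℕ∞) ≤ ringKrullDim (A ⧸ L) := by
  have hL : ∀ i, L ≤ ((p i).asIdeal.comap (Ideal.Quotient.mk K)) := fun i =>
    le_trans h (Ideal.comap_mono (p.monotone (Fin.zero_le i)))
  have hprime : ∀ i : Fin (p.length + 1),
      (Ideal.map (Ideal.Quotient.mk L) ((p i).asIdeal.comap (Ideal.Quotient.mk K))).IsPrime := by
    intro i
    haveI := (p i).2
    exact Ideal.map_isPrime_of_surjective Ideal.Quotient.mk_surjective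
      (by rw [Ideal.mk_ker]; exact hL i)
  have hcomap : ∀ i, (Ideal.map (Ideal.Quotient.mk L)
      ((p i).asIdeal.comap (Ideal.Quotient.mk K))).comap (Ideal.Quotient.mk L)
      = (p i).asIdeal.comap (Ideal.Quotient.mk K) := by
    intro i
    rw [Ideal.comap_map_of_surjective _ Ideal.Quotient.mk_surjective, ← RingHom.ker_eq_comap_bot,
      Ideal.mk_ker, sup_eq_left]
    exact hL i
  let q : LTSeries (PrimeSpectrum (A ⧸ L)) :=
    ⟨p.length, fun i => ⟨Ideal.map (Ideal.Quotient.mk L)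
      ((p i).asIdeal.comap (Ideal.Quotient.mk K)), hprime i⟩, by
      intro k
      have hstep : (p k.castSucc).asIdeal < (p k.succ).asIdeal := p.step k
      have hle : (p k.castSucc).asIdeal.comap (Ideal.Quotient.mk K)
          ≤ (p k.succ).asIdeal.comap (Ideal.Quotient.mk K) := Ideal.comap_mono hstep.le
      refine lt_of_le_of_ne (Ideal.map_mono hle) ?_
      intro heq
      have h2 : (p k.castSucc).asIdeal.comap (Ideal.Quotient.mk K)
          = (p k.succ).asIdeal.comap (Ideal.Quotient.mk K) := by
        rw [← hcomap k.castSucc, ← hcomap k.succ]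
        exact congrArg (Ideal.comap (Ideal.Quotient.mk L)) heq
      have h3 : (p k.castSucc).asIdeal = (p k.succ).asIdeal := by
        rw [← Ideal.map_comap_of_surjective _ Ideal.Quotient.mk_surjective
            (p k.castSucc).asIdeal,
          ← Ideal.map_comap_of_surjective _ Ideal.Quotient.mk_surjective (p k.succ).asIdeal, h2]
      exact hstep.ne h3⟩
  exact Order.LTSeries.length_le_krullDim q

/-- `dim (A ⧸ (I ⊓ J)) ≤ max (dim (A ⧸ I)) (dim (A ⧸ J))`. -/
lemma ringKrullDim_quotient_inf_le {A : Type} [CommRing A] (I J : Ideal A) :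
    ringKrullDim (A ⧸ (I ⊓ J)) ≤ max (ringKrullDim (A ⧸ I)) (ringKrullDim (A ⧸ J)) := by
  refine iSup_le fun p => ?_
  have hker : I ⊓ J ≤ p.head.asIdeal.comap (Ideal.Quotient.mk (I ⊓ J)) :=
    le_trans (le_of_eq Ideal.mk_ker.symm) (Ideal.ker_le_comap _)
  haveI := p.head.2
  have := (Ideal.comap_isPrime (Ideal.Quotient.mk (I ⊓ J)) p.head.asIdeal).inf_le.mp hker
  rcases this with h | h
  · exact le_trans (aux_length_le _ _ p h) (le_max_left _ _)
  · exact le_trans (aux_length_le _ _ p h) (le_max_right _ _)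

lemma dim_ann_le_of_ann_le {A : Type} [CommRing A] {I J : Ideal A} (h : I ≤ J) :
    ringKrullDim (A ⧸ J) ≤ ringKrullDim (A ⧸ I) := by
  refine ringKrullDim_le_of_surjective (Ideal.Quotient.factor h) ?_
  intro x
  obtain ⟨y, rfl⟩ := Ideal.Quotient.mk_surjective x
  exact ⟨Ideal.Quotient.mk I y, rfl⟩

/-- Let `A` be a Noetherian ring, `M` a finitely generated `A`-module and
`i ≥ 0`.  Then `M_{≤ i} = { x ∈ M : dim (A / Ann x) ≤ i }` is a submodule of `M`, and its
associated primes are exactly the associated primes `p` of `M` with `dim (A/p) ≤ i`. -/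
theorem mle_is_submodule_and_ass (A : Type) [CommRing A] [IsNoetherianRing A]
    (M : Type) [AddCommGroup M] [Module A M] [Module.Finite A M] (i : ℕ) :
    ∃ N : Submodule A M,
      (N : Set M) =
        {x : M | ringKrullDim (A ⧸ (Submodule.span A {x}).annihilator) ≤ (i : WithBot ℕ∞)} ∧
      associatedPrimes A N =
        {p ∈ associatedPrimes A M | ringKrullDim (A ⧸ p) ≤ (i : WithBot ℕ∞)} := by
  set S : Set M :=
    {x : M | ringKrullDim (A ⧸ (Submodule.span A {x}).annihilator) ≤ (i : WithBot ℕ∞)} with hS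
  have add_mem' : ∀ {x y : M}, x ∈ S → y ∈ S → x + y ∈ S := by
    intro x y hx hy
    have hinf : (Submodule.span A {x}).annihilator ⊓ (Submodule.span A {y}).annihilator
        ≤ (Submodule.span A {x + y}).annihilator := by
      intro a ha
      rw [Submodule.mem_inf, Submodule.mem_annihilator_span_singleton,
        Submodule.mem_annihilator_span_singleton] at ha
      rw [Submodule.mem_annihilator_span_singleton, smul_add, ha.1, ha.2, add_zero]
    calc ringKrullDim (A ⧸ (Submodule.span A {x + y}).annihilator)
        ≤ ringKrullDim (A ⧸ ((Submodule.span A {x}).annihilator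
            ⊓ (Submodule.span A {y}).annihilator)) := dim_ann_le_of_ann_le hinf
      _ ≤ max (ringKrullDim (A ⧸ (Submodule.span A {x}).annihilator))
            (ringKrullDim (A ⧸ (Submodule.span A {y}).annihilator)) :=
          ringKrullDim_quotient_inf_le _ _
      _ ≤ (i : WithBot ℕ∞) := max_le hx hy
  have zero_mem' : (0 : M) ∈ S := by
    have : (Submodule.span A ({(0 : M)} : Set M)).annihilator = ⊤ := by
      rw [Submodule.span_zero_singleton, Submodule.annihilator_bot]
    rw [hS, Set.mem_setOf_eq, this]
    haveI : Subsingleton (A ⧸ (⊤ : Ideal A)) :=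
      Ideal.Quotient.subsingleton_iff.mpr rfl
    rw [ringKrullDim_eq_bot_of_subsingleton]
    exact bot_le
  have smul_mem' : ∀ (a : A) {x : M}, x ∈ S → a • x ∈ S := by
    intro a x hx
    have hann : (Submodule.span A {x}).annihilator ≤ (Submodule.span A {a • x}).annihilator := by
      intro b hb
      rw [Submodule.mem_annihilator_span_singleton] at hb ⊢
      rw [smul_comm, hb, smul_zero]
    exact le_trans (dim_ann_le_of_ann_le hann) hx
  refine ⟨⟨⟨⟨S, add_mem'⟩, zero_mem'⟩, smul_mem'⟩, rfl, ?_⟩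
  set N : Submodule A M := ⟨⟨⟨S, add_mem'⟩, zero_mem'⟩, smul_mem'⟩ with hN
  ext p
  constructor
  · intro hpa
    obtain ⟨hp, y, hy⟩ := isAssociatedPrime_iff.mp hpa
    have key : p = (Submodule.span A {(y : M)}).annihilator := by
      rw [hy]
      ext r
      rw [Submodule.mem_colon_singleton, Submodule.mem_bot, Submodule.mem_annihilator_span_singleton]
      constructor
      · intro h; exact congrArg Subtype.val h
      · intro h; exact Subtype.ext h
    refine ⟨isAssociatedPrime_iff.mpr ⟨hp, (y : M), by
      rw [key]; ext r
      rw [Submodule.mem_colon_singleton, Submodule.mem_bot,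
        Submodule.mem_annihilator_span_singleton]⟩, ?_⟩
    have : (y : M) ∈ S := y.2
    rw [hS, Set.mem_setOf_eq] at this
    rwa [key]
  · rintro ⟨hpa, hdim⟩
    obtain ⟨hp, x, hx⟩ := isAssociatedPrime_iff.mp hpa
    have hx' : (Submodule.span A {x}).annihilator = p := by
      rw [hx]; ext r
      rw [Submodule.mem_colon_singleton, Submodule.mem_bot,
        Submodule.mem_annihilator_span_singleton]
    have hxS : x ∈ S := by
      rw [hS, Set.mem_setOf_eq, hx']
      exact hdim
    refine isAssociatedPrime_iff.mpr ⟨hp, ⟨x, hxS⟩, ?_⟩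
    rw [hx]
    ext r
    rw [Submodule.mem_colon_singleton, Submodule.mem_colon_singleton, Submodule.mem_bot,
      Submodule.mem_bot]
    constructor
    · intro h; exact Subtype.ext h
    · intro h; exact congrArg Subtype.val h
end

section
/- Let A be a standard bigraded Noetherian algebra over an Artinian local ring and M a finitely generated bigraded A-module. Then rd M = max{ dim A/p : p a relevant bihomogeneous prime ideal containing Ann(M) }, where a bihomogeneous prime is relevant if it does not contain A_+. -/
set_option synthInstance.maxHeartbeats 400000
set_option maxHeartbeats 1000000

/-- The relevant ideal `A₊ = (x₁,…,xₙ) ∩ (y₁,…,yₘ)` of a bigraded algebra: the intersection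
of the ideal generated by the degree-`(1,0)` part and the ideal generated by the
degree-`(0,1)` part. -/
noncomputable def biPlus {A₀ A : Type} [CommRing A₀] [CommRing A] [Algebra A₀ A]
    (𝒜 : ℕ × ℕ → Submodule A₀ A) : Ideal A :=
  Ideal.span (𝒜 (1, 0) : Set A) ⊓ Ideal.span (𝒜 (0, 1) : Set A)

/-- The saturation `(J : A₊^∞) = ⋃ₖ (J : A₊ᵏ)`. -/
noncomputable def satPlus {A₀ A : Type} [CommRing A₀] [CommRing A] [Algebra A₀ A]
    (𝒜 : ℕ × ℕ → Submodule A₀ A) (J : Ideal A) : Ideal A :=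
  ⨆ k : ℕ, Submodule.colon J ((biPlus 𝒜 ^ k : Ideal A) : Submodule A A)

/-- The relevant dimension `rd M = dim A/((Ann M) : A₊^∞)` of an `A`-module `M`. -/
noncomputable def relDim {A₀ A : Type} [CommRing A₀] [CommRing A] [Algebra A₀ A]
    (𝒜 : ℕ × ℕ → Submodule A₀ A) (M : Type) [AddCommGroup M] [Module A M] :
    WithBot ℕ∞ :=
  ringKrullDim (A ⧸ satPlus 𝒜 (Module.annihilator A M))

namespace RelDimAux

open DirectSum

variable {A₀ A : Type} [CommRing A₀] [CommRing A] [Algebra A₀ A]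

section Sat

variable (𝒜 : ℕ × ℕ → Submodule A₀ A)

lemma mem_colon_span {N : Ideal A} {s : Set A} {a : A}
    (h : ∀ g ∈ s, a * g ∈ N) : a ∈ Submodule.colon N (Ideal.span s) := by
  rw [Submodule.mem_colon]
  intro p hp
  have hsub : s ⊆ ↑(Submodule.comap (LinearMap.lsmul A A a) N) := by
    intro g hg
    simpa [LinearMap.lsmul_apply, smul_eq_mul] using h g hg
  have := (Submodule.span_le.mpr hsub) hp
  simpa using this

lemma satPlus_term_mono (J : Ideal A) :
    Monotone (fun k : ℕ => Submodule.colon J ((biPlus 𝒜 ^ k : Ideal A) : Submodule A A)) := by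
  intro k l hkl a ha
  rw [Submodule.mem_colon] at ha ⊢
  intro p hp
  exact ha p (Ideal.pow_le_pow_right hkl hp)

lemma mem_satPlus_iff {J : Ideal A} {a : A} :
    a ∈ satPlus 𝒜 J ↔
      ∃ k, a ∈ Submodule.colon J ((biPlus 𝒜 ^ k : Ideal A) : Submodule A A) := by
  unfold satPlus
  exact Submodule.mem_iSup_of_directed _ ((satPlus_term_mono 𝒜 J).directed_le)

lemma le_satPlus (J : Ideal A) : J ≤ satPlus 𝒜 J := by
  intro a ha
  rw [mem_satPlus_iff]
  refine ⟨0, Submodule.mem_colon.mpr fun p _ => ?_⟩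
  rw [smul_eq_mul]
  exact Ideal.mul_mem_right _ _ ha

lemma satPlus_le_prime {J p : Ideal A} (hp : p.IsPrime) (hJ : J ≤ p)
    (hP : ¬ biPlus 𝒜 ≤ p) : satPlus 𝒜 J ≤ p := by
  intro a ha
  rw [mem_satPlus_iff] at ha
  obtain ⟨k, hk⟩ := ha
  obtain ⟨b, hbP, hbp⟩ := SetLike.not_le_iff_exists.mp hP
  have hbk : b ^ k ∈ (biPlus 𝒜 ^ k : Ideal A) := Ideal.pow_mem_pow hbP k
  have habk : a * b ^ k ∈ J := by
    have := Submodule.mem_colon.mp hk _ hbk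
    rwa [smul_eq_mul] at this
  rcases hp.mem_or_mem (hJ habk) with h | h
  · exact h
  · exact absurd (hp.mem_of_pow_mem _ h) hbp

lemma colon_mul_le {J P Q : Ideal A} {a : A}
    (h : a ∈ Submodule.colon (Submodule.colon J (Q : Submodule A A)) (P : Submodule A A)) :
    a ∈ Submodule.colon J ((P * Q : Ideal A) : Submodule A A) := by
  rw [Submodule.mem_colon]
  intro x hx
  rw [smul_eq_mul]
  refine Submodule.mul_induction_on hx ?_ ?_
  · intro r hr s hs
    have h1 : a * r ∈ Submodule.colon J (Q : Submodule A A) := by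
      have := Submodule.mem_colon.mp h r hr
      rwa [smul_eq_mul] at this
    have h2 : (a * r) * s ∈ J := by
      have := Submodule.mem_colon.mp h1 s hs
      rwa [smul_eq_mul] at this
    rwa [mul_assoc] at h2
  · intro x y hx hy
    rw [mul_add]
    exact J.add_mem hx hy

lemma colon_pow_satPlus_le [IsNoetherianRing A] (J : Ideal A) (n : ℕ) {a : A}
    (h : a ∈ Submodule.colon (satPlus 𝒜 J) ((biPlus 𝒜 ^ n : Ideal A) : Submodule A A)) :
    a ∈ satPlus 𝒜 J := by
  classical
  obtain ⟨s, hs⟩ := IsNoetherian.noetherian (biPlus 𝒜 ^ n : Ideal A)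
  have hgen : ∀ g ∈ (s : Set A), ∃ k,
      a * g ∈ Submodule.colon J ((biPlus 𝒜 ^ k : Ideal A) : Submodule A A) := by
    intro g hg
    have hgmem : g ∈ (biPlus 𝒜 ^ n : Ideal A) := by
      rw [← hs]; exact Ideal.subset_span hg
    have := Submodule.mem_colon.mp h g hgmem
    rw [smul_eq_mul] at this
    exact (mem_satPlus_iff 𝒜).mp this
  choose! k hk using hgen
  set K := s.sup k with hK
  have hKg : ∀ g ∈ (s : Set A),
      a * g ∈ Submodule.colon J ((biPlus 𝒜 ^ K : Ideal A) : Submodule A A) := by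
    intro g hg
    exact satPlus_term_mono 𝒜 J (Finset.le_sup hg) (hk g hg)
  have h1 : a ∈ Submodule.colon
      (Submodule.colon J ((biPlus 𝒜 ^ K : Ideal A) : Submodule A A))
      (Ideal.span (s : Set A)) := mem_colon_span hKg
  rw [Ideal.submodule_span_eq] at hs
  rw [hs] at h1
  have h2 : a ∈ Submodule.colon J ((biPlus 𝒜 ^ (n + K) : Ideal A) : Submodule A A) := by
    rw [pow_add]
    exact colon_mul_le h1
  exact (mem_satPlus_iff 𝒜).mpr ⟨n + K, h2⟩

lemma not_biPlus_le_of_mem_minimalPrimes [IsNoetherianRing A] {J q : Ideal A}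
    (hq : q ∈ (satPlus 𝒜 J).minimalPrimes) : ¬ biPlus 𝒜 ≤ q := by
  classical
  intro hPq
  set S := satPlus 𝒜 J with hS
  have hqp : q.IsPrime := hq.1.1
  have hSq : S ≤ q := hq.1.2
  set B := Localization.AtPrime q with hB
  set f := algebraMap A B with hf
  haveI : IsNoetherianRing B :=
    IsLocalization.isNoetherianRing q.primeCompl B inferInstance
  have hrad : Ideal.map f q ≤ (Ideal.map f S).radical := by
    rw [Ideal.radical_eq_sInf]
    apply le_sInf
    rintro P ⟨hSP, hPprime⟩
    haveI := hPprime
    have hcom : Ideal.comap f P ≤ q := by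
      intro x hx
      by_contra hxq
      exact hPprime.ne_top (P.eq_top_of_isUnit_mem hx
        (IsLocalization.map_units B (⟨x, hxq⟩ : q.primeCompl)))
    have hScom : S ≤ Ideal.comap f P :=
      le_trans Ideal.le_comap_map (Ideal.comap_mono hSP)
    have hmin : Minimal (fun p : Ideal A => p.IsPrime ∧ S ≤ p) q := hq
    have hqcom : q ≤ Ideal.comap f P :=
      hmin.le_of_le ⟨Ideal.IsPrime.comap f, hScom⟩ hcom
    exact Ideal.map_le_iff_le_comap.mpr hqcom
  obtain ⟨n, hn⟩ :=
    Ideal.exists_pow_le_of_le_radical_of_fg hrad (IsNoetherian.noetherian _)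
  have hPn : Ideal.map f (biPlus 𝒜 ^ n) ≤ Ideal.map f S := by
    rw [Ideal.map_pow]
    exact le_trans (Ideal.pow_right_mono (Ideal.map_mono hPq) n) hn
  obtain ⟨s, hsspan⟩ := IsNoetherian.noetherian (biPlus 𝒜 ^ n : Ideal A)
  have key : ∀ g ∈ (s : Set A), ∃ t : A, t ∈ q.primeCompl ∧ t * g ∈ S := by
    intro g hg
    have hgmem : g ∈ (biPlus 𝒜 ^ n : Ideal A) := by
      rw [← hsspan]; exact Ideal.subset_span hg
    have hfg : f g ∈ Ideal.map f S := hPn (Ideal.mem_map_of_mem f hgmem)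
    rw [IsLocalization.mem_map_algebraMap_iff q.primeCompl] at hfg
    obtain ⟨⟨⟨x, hxS⟩, t⟩, hxt⟩ := hfg
    rw [← map_mul] at hxt
    obtain ⟨c, hc⟩ := (IsLocalization.eq_iff_exists q.primeCompl B).mp hxt
    refine ⟨(c : A) * (t : A), q.primeCompl.mul_mem c.2 t.2, ?_⟩
    have heq : (c : A) * (g * (t : A)) = (c : A) * x := hc
    have : ((c : A) * (t : A)) * g = (c : A) * x := by rw [← heq]; ring
    rw [this]
    exact Ideal.mul_mem_left _ _ hxS
  choose! t ht1 ht2 using key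
  set u := s.prod t with hu
  have humem : u ∈ q.primeCompl := Submonoid.prod_mem _ fun g hg => ht1 g hg
  have hug : ∀ g ∈ (s : Set A), u * g ∈ S := by
    intro g hg
    have : u = (s.erase g).prod t * t g := by
      rw [Finset.prod_erase_mul _ _ hg]
    rw [this, mul_assoc]
    exact Ideal.mul_mem_left _ _ (ht2 g hg)
  have hucolon : u ∈ Submodule.colon S ((biPlus 𝒜 ^ n : Ideal A) : Submodule A A) := by
    have h3 := mem_colon_span hug
    rw [Ideal.submodule_span_eq] at hsspan
    rwa [hsspan] at h3
  have : u ∈ S := colon_pow_satPlus_le 𝒜 J n hucolon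
  exact humem (hSq this)

end Sat

section LexGrade

open Order

variable (𝒜 : ℕ × ℕ → Submodule A₀ A) [GradedAlgebra 𝒜]

/-- The grading of `A` re-indexed by the lexicographic order on `ℕ × ℕ`. -/
def lexGr : (ℕ ×ₗ ℕ) → Submodule A₀ A := fun i => 𝒜 (ofLex i)

instance : SetLike.GradedOne (lexGr 𝒜) := ⟨SetLike.one_mem_graded 𝒜⟩

instance : SetLike.GradedMul (lexGr 𝒜) :=
  ⟨fun {i j gi gj} hi hj => SetLike.mul_mem_graded (A := 𝒜) hi hj⟩

instance : SetLike.GradedMonoid (lexGr 𝒜) :=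
  { (inferInstance : SetLike.GradedOne (lexGr 𝒜)),
    (inferInstance : SetLike.GradedMul (lexGr 𝒜)) with }

lemma equivCongrLeft_lex_of (i : ℕ × ℕ) (x : 𝒜 i) :
    DirectSum.equivCongrLeft (toLex (α := ℕ × ℕ))
        (DirectSum.of (fun j => ↥(𝒜 j)) i x) =
      DirectSum.of (fun k => ↥(lexGr 𝒜 k)) (toLex i) x := by
  classical
  refine DFinsupp.ext fun k => ?_
  rw [DirectSum.equivCongrLeft_apply]
  rcases eq_or_ne (toLex i) k with rfl | h
  · show (DirectSum.of (fun j => ↥(𝒜 j)) i x) i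
        = (DirectSum.of (fun k => ↥(lexGr 𝒜 k)) (toLex i) x) (toLex i)
    rw [DirectSum.of_eq_same]
    exact (DirectSum.of_eq_same (β := fun k => ↥(lexGr 𝒜 k)) (toLex i) x).symm
  · show (DirectSum.of (fun j => ↥(𝒜 j)) i x) (ofLex k)
        = (DirectSum.of (fun k => ↥(lexGr 𝒜 k)) (toLex i) x) k
    have h1 : i ≠ ofLex k := fun hik => h (by rw [hik]; rfl)
    rw [DirectSum.of_eq_of_ne (β := fun j => ↥(𝒜 j)) i (ofLex k) x h1.symm,
      DirectSum.of_eq_of_ne (β := fun k => ↥(lexGr 𝒜 k)) (toLex i) k x h.symm]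
    rfl

lemma coe_equivCongrLeft_lex (x : ⨁ i, 𝒜 i) :
    (DirectSum.coeAddMonoidHom (lexGr 𝒜)) (DirectSum.equivCongrLeft (toLex (α := ℕ × ℕ)) x) =
      DirectSum.coeAddMonoidHom 𝒜 x := by
  induction x using DirectSum.induction_on with
  | zero => erw [map_zero]
  | of i x =>
    rw [equivCongrLeft_lex_of, DirectSum.coeAddMonoidHom_of]
    exact DirectSum.coeAddMonoidHom_of (lexGr 𝒜) (toLex i) x
  | add x y hx hy =>
    rw [map_add]; erw [map_add (DirectSum.coeAddMonoidHom (lexGr 𝒜))]; rw [hx, hy, map_add]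

noncomputable instance lexGrDecomposition : DirectSum.Decomposition (lexGr 𝒜) where
  decompose' a := DirectSum.equivCongrLeft (toLex (α := ℕ × ℕ)) (DirectSum.decompose 𝒜 a)
  left_inv a := by
    rw [coe_equivCongrLeft_lex]
    exact (DirectSum.decompose 𝒜).left_inv a
  right_inv x := by
    have h1 : DirectSum.coeAddMonoidHom (lexGr 𝒜) x =
        DirectSum.coeAddMonoidHom 𝒜
          ((DirectSum.equivCongrLeft (toLex (α := ℕ × ℕ))).symm x) := by
      rw [← coe_equivCongrLeft_lex 𝒜 ((DirectSum.equivCongrLeft (toLex (α := ℕ × ℕ))).symm x)]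
      erw [AddEquiv.apply_symm_apply]
    have h2 : DirectSum.decompose 𝒜
        (DirectSum.coeAddMonoidHom 𝒜
          ((DirectSum.equivCongrLeft (toLex (α := ℕ × ℕ))).symm x)) =
        (DirectSum.equivCongrLeft (toLex (α := ℕ × ℕ))).symm x :=
      (DirectSum.decompose 𝒜).right_inv _
    show (DirectSum.equivCongrLeft (toLex (α := ℕ × ℕ)))
        (DirectSum.decompose 𝒜 (DirectSum.coeAddMonoidHom (lexGr 𝒜) x)) = x
    rw [h1, h2]
    erw [AddEquiv.apply_symm_apply]

noncomputable instance lexGrGradedRing : GradedRing (lexGr 𝒜) :=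
  { (inferInstance : SetLike.GradedMonoid (lexGr 𝒜)),
    (inferInstance : DirectSum.Decomposition (lexGr 𝒜)) with }

lemma coe_decompose_lexGr (r : A) (k : ℕ ×ₗ ℕ) :
    (DirectSum.decompose (lexGr 𝒜) r k : A) = DirectSum.decompose 𝒜 r (ofLex k) := by
  rfl

lemma isHomogeneous_lexGr_iff (I : Ideal A) :
    I.IsHomogeneous (lexGr 𝒜) ↔ I.IsHomogeneous 𝒜 := by
  constructor
  · intro h i r hr
    have := h (toLex i) hr
    rwa [coe_decompose_lexGr] at this
  · intro h k r hr
    have h2 : (DirectSum.decompose (lexGr 𝒜) r k : A) ∈ I := by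
      rw [coe_decompose_lexGr]
      exact h (ofLex k) hr
    exact h2

end LexGrade

section Annihilator

variable (𝒜 : ℕ × ℕ → Submodule A₀ A) [GradedAlgebra 𝒜]
variable (M : Type) [AddCommGroup M] [Module A M] [Module A₀ M] [IsScalarTower A₀ A M]
variable (ℳ : ℕ × ℕ → Submodule A₀ M) [DirectSum.Decomposition ℳ] [SetLike.GradedSMul 𝒜 ℳ]

include ℳ in
lemma annihilator_isHomogeneous :
    (Module.annihilator A M).IsHomogeneous 𝒜 := by
  classical
  intro i a ha
  rw [Module.mem_annihilator] at ha ⊢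
  have key : ∀ (j : ℕ × ℕ) (m : M), m ∈ ℳ j → (DirectSum.decompose 𝒜 a i : A) • m = 0 := by
    intro j m hm
    have h0 : a • m = 0 := ha m
    set s := (DirectSum.decompose 𝒜 a).support with hsdef
    have ha2 : a = ∑ k ∈ s, (DirectSum.decompose 𝒜 a k : A) :=
      (DirectSum.sum_support_decompose 𝒜 a).symm
    have hsum0 : ∑ k ∈ s, (DirectSum.decompose 𝒜 a k : A) • m = 0 := by
      rw [← Finset.sum_smul, ← ha2, h0]
    let φ : M →+ M := AddMonoidHom.mk'
      (fun x => (DirectSum.decompose ℳ x (i + j) : M))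
      (fun x y => by
        show (DirectSum.decompose ℳ (x + y) (i + j) : M) = _
        rw [DirectSum.decompose_add, DirectSum.add_apply, Submodule.coe_add])
    have h3 : ∑ k ∈ s,
        (DirectSum.decompose ℳ ((DirectSum.decompose 𝒜 a k : A) • m) (i + j) : M) = 0 := by
      have hmap : φ (∑ k ∈ s, ((DirectSum.decompose 𝒜 a k : A) • m))
          = ∑ k ∈ s, φ (((DirectSum.decompose 𝒜 a k : A) • m)) := map_sum φ _ s
      rw [hsum0, map_zero] at hmap
      simpa only [φ, AddMonoidHom.mk'_apply] using hmap.symm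
    have h4 : ∀ k ∈ s,
        (DirectSum.decompose ℳ ((DirectSum.decompose 𝒜 a k : A) • m) (i + j) : M)
          = if k = i then (DirectSum.decompose 𝒜 a k : A) • m else 0 := by
      intro k _
      have hkm : (DirectSum.decompose 𝒜 a k : A) • m ∈ ℳ (k + j) := by
        exact SetLike.GradedSMul.smul_mem
          (SetLike.coe_mem (DirectSum.decompose 𝒜 a k)) hm
      by_cases hk : k = i
      · subst hk
        rw [if_pos rfl]
        exact DirectSum.decompose_of_mem_same ℳ hkm
      · rw [if_neg hk]
        exact DirectSum.decompose_of_mem_ne ℳ hkm (fun hc => hk (add_right_cancel hc))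
    rw [Finset.sum_congr rfl h4, Finset.sum_ite_eq' s i
      (fun k => (DirectSum.decompose 𝒜 a k : A) • m)] at h3
    by_cases hi : i ∈ s
    · rwa [if_pos hi] at h3
    · rw [hsdef] at hi
      have hz : DirectSum.decompose 𝒜 a i = 0 := DFinsupp.notMem_support_iff.mp hi
      rw [hz, ZeroMemClass.coe_zero, zero_smul]
  intro m
  rw [← DirectSum.sum_support_decompose ℳ m, Finset.smul_sum]
  exact Finset.sum_eq_zero fun j _ => key j _ (SetLike.coe_mem _)

end Annihilator

lemma ringKrullDim_quotient_mono {p q : Ideal A} (h : q ≤ p) :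
    ringKrullDim (A ⧸ p) ≤ ringKrullDim (A ⧸ q) := by
  refine ringKrullDim_le_of_surjective (Ideal.Quotient.factor h) ?_
  rintro ⟨x⟩
  exact ⟨Ideal.Quotient.mk q x, rfl⟩

end RelDimAux

/-- For a finitely generated bigraded module `M` over a standard bigraded
Noetherian algebra over an Artinian local ring,
`rd M = max { dim A/p : p relevant bihomogeneous prime, Ann M ⊆ p }`. -/
theorem relDim_eq_sup_relevant_primes (A₀ A : Type) [CommRing A₀] [IsArtinianRing A₀]
    [IsLocalRing A₀] [CommRing A] [IsNoetherianRing A] [Algebra A₀ A]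
    (𝒜 : ℕ × ℕ → Submodule A₀ A) [GradedAlgebra 𝒜]
    (hstd : Algebra.adjoin A₀ ((𝒜 (1, 0) : Set A) ∪ (𝒜 (0, 1) : Set A)) = ⊤)
    (M : Type) [AddCommGroup M] [Module A M] [Module A₀ M] [IsScalarTower A₀ A M]
    [Module.Finite A M]
    (ℳ : ℕ × ℕ → Submodule A₀ M) [DirectSum.Decomposition ℳ] [SetLike.GradedSMul 𝒜 ℳ] :
    relDim 𝒜 M = sSup {d : WithBot ℕ∞ | ∃ p : Ideal A, p.IsPrime ∧ p.IsHomogeneous 𝒜 ∧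
      ¬ biPlus 𝒜 ≤ p ∧ Module.annihilator A M ≤ p ∧ d = ringKrullDim (A ⧸ p)} := by
  classical
  set J := Module.annihilator A M with hJdef
  have hJhom : J.IsHomogeneous 𝒜 := RelDimAux.annihilator_isHomogeneous 𝒜 M ℳ
  set S := satPlus 𝒜 J with hSdef
  apply le_antisymm
  · -- `relDim ≤ sSup`
    have hdim : relDim 𝒜 M =
        ⨆ c : LTSeries (PrimeSpectrum (A ⧸ S)), (c.length : WithBot ℕ∞) := rfl
    rw [hdim]
    apply iSup_le
    intro c
    set p : Ideal A := (c.head).asIdeal.comap (Ideal.Quotient.mk S) with hpdef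
    haveI hpprime : p.IsPrime := Ideal.IsPrime.comap _
    have hSp : S ≤ p := by
      intro x hx
      show Ideal.Quotient.mk S x ∈ (c.head).asIdeal
      rw [Ideal.Quotient.eq_zero_iff_mem.mpr hx]
      exact (c.head).asIdeal.zero_mem
    obtain ⟨q₀, hq₀min, hq₀p⟩ := Ideal.exists_minimalPrimes_le hSp
    have hq₀prime : q₀.IsPrime := hq₀min.1.1
    have hSq₀ : S ≤ q₀ := hq₀min.1.2
    have hnb : ¬ biPlus 𝒜 ≤ q₀ :=
      RelDimAux.not_biPlus_le_of_mem_minimalPrimes 𝒜 hq₀min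
    set q : Ideal A := (q₀.homogeneousCore (RelDimAux.lexGr 𝒜)).toIdeal with hqdef
    haveI hqprime : q.IsPrime := hq₀prime.homogeneousCore
    have hqq₀ : q ≤ q₀ := Ideal.toIdeal_homogeneousCore_le _ _
    have hqhom : q.IsHomogeneous 𝒜 :=
      (RelDimAux.isHomogeneous_lexGr_iff 𝒜 q).mp
        ((q₀.homogeneousCore (RelDimAux.lexGr 𝒜)).isHomogeneous)
    have hJq : J ≤ q := by
      have hJ' : J.IsHomogeneous (RelDimAux.lexGr 𝒜) :=
        (RelDimAux.isHomogeneous_lexGr_iff 𝒜 J).mpr hJhom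
      have hJle : J ≤ q₀ := le_trans (RelDimAux.le_satPlus 𝒜 J) hSq₀
      have := (Ideal.homogeneousCore.gc (RelDimAux.lexGr 𝒜)
        (a := (⟨J, hJ'⟩ : HomogeneousIdeal (RelDimAux.lexGr 𝒜))) (b := q₀)).mp hJle
      exact fun x hx => this hx
    have hnbq : ¬ biPlus 𝒜 ≤ q := fun h => hnb (le_trans h hqq₀)
    have hqi : ∀ i : Fin (c.length + 1),
        ((c i).asIdeal.comap (Ideal.Quotient.mk S)).IsPrime :=
      fun i => Ideal.IsPrime.comap _
    have hg : ∀ i : Fin (c.length + 1),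
        q ≤ (c i).asIdeal.comap (Ideal.Quotient.mk S) := by
      intro i
      refine le_trans (le_trans hqq₀ hq₀p) (Ideal.comap_mono ?_)
      exact (PrimeSpectrum.asIdeal_le_asIdeal _ _).mpr (c.monotone (Fin.zero_le i))
    have hker : ∀ i : Fin (c.length + 1),
        RingHom.ker (Ideal.Quotient.mk q) ≤ (c i).asIdeal.comap (Ideal.Quotient.mk S) := by
      intro i
      rw [Ideal.mk_ker]
      exact hg i
    let F : Fin (c.length + 1) → PrimeSpectrum (A ⧸ q) := fun i =>
      ⟨((c i).asIdeal.comap (Ideal.Quotient.mk S)).map (Ideal.Quotient.mk q),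
        by
          haveI := hqi i
          exact Ideal.map_isPrime_of_surjective Ideal.Quotient.mk_surjective (hker i)⟩
    have hFstrict : ∀ i : Fin c.length, F i.castSucc < F i.succ := by
      intro i
      have hlt : (c i.castSucc).asIdeal < (c i.succ).asIdeal :=
        (PrimeSpectrum.asIdeal_lt_asIdeal _ _).mpr (c.step i)
      have hclt : (c i.castSucc).asIdeal.comap (Ideal.Quotient.mk S)
          < (c i.succ).asIdeal.comap (Ideal.Quotient.mk S) := by
        refine lt_of_le_of_ne (Ideal.comap_mono hlt.le) ?_
        intro heq
        exact hlt.ne (Ideal.comap_injective_of_surjective _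
          Ideal.Quotient.mk_surjective heq)
      show (F i.castSucc).asIdeal < (F i.succ).asIdeal
      refine lt_of_le_of_ne (Ideal.map_mono hclt.le) ?_
      intro heq
      have h1 := congrArg (Ideal.comap (Ideal.Quotient.mk q)) heq
      rw [Ideal.comap_map_of_surjective _ Ideal.Quotient.mk_surjective,
        Ideal.comap_map_of_surjective _ Ideal.Quotient.mk_surjective,
        ← RingHom.ker_eq_comap_bot, sup_eq_left.mpr (hker i.castSucc),
        sup_eq_left.mpr (hker i.succ)] at h1
      exact hclt.ne h1
    let c' : LTSeries (PrimeSpectrum (A ⧸ q)) :=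
      ⟨c.length, F, hFstrict⟩
    have hlen : (c.length : WithBot ℕ∞) ≤ ringKrullDim (A ⧸ q) :=
      Order.LTSeries.length_le_krullDim c'
    exact le_trans hlen (le_sSup ⟨q, hqprime, hqhom, hnbq, hJq, rfl⟩)
  · apply sSup_le
    rintro d ⟨p, hp, -, hnbp, hJp, rfl⟩
    exact RelDimAux.ringKrullDim_quotient_mono
      (RelDimAux.satPlus_le_prime 𝒜 hp hJp hnbp)
end
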